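/- arXiv:1804.01291 — 4 statements merged into one kernel-verified Lean document; each statement's English description precedes it below -/
import Mathlib

section
/- The matrix exponential of the bond term of the spin Hamiltonian H₁ over half a driving period is, up to the global phase −i, the SWAP gate: Matrix.exp(−I·(π/4)·(I₄ + σx⊗σx + σy⊗σy + σz⊗σz)) = −I · SWAP. -/
/-!
Dirac's exchange identity `1 + σ⃗ ⊗ σ⃗ = 2 · SWAP` turns the bond term into a multiple of the
involution SWAP. For any involution `S`, the element `(1 + S) / 2` is idempotent, and the
exponential of a multiple of an idempotent is computed termwise from its power series; this gives
`exp (b • S) = cosh b + sinh b • S`. At `b = -iπ/2` this is `cos (π/2) - i sin (π/2) • S = -i • S`.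
-/

open Matrix Kronecker Complex

/-- The 2×2 Pauli matrices. -/
noncomputable def sigmaX : Matrix (Fin 2) (Fin 2) ℂ := !![0, 1; 1, 0]
noncomputable def sigmaY : Matrix (Fin 2) (Fin 2) ℂ := !![0, -I; I, 0]
noncomputable def sigmaZ : Matrix (Fin 2) (Fin 2) ℂ := !![1, 0; 0, -1]

/-- The SWAP gate: the permutation matrix of `(a,b) ↦ (b,a)` on `Fin 2 × Fin 2`,
so that `SWAP · e_{(a,b)} = e_{(b,a)}`. -/
noncomputable def swapGate : Matrix (Fin 2 × Fin 2) (Fin 2 × Fin 2) ℂ :=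
  Matrix.of fun i j => if i = (j.2, j.1) then 1 else 0

open NormedSpace Nat in
theorem IsIdempotentElem.exp_smul {𝕂 𝔸 : Type*} [RCLike 𝕂] [NormedRing 𝔸] [NormedAlgebra 𝕂 𝔸]
    [CompleteSpace 𝔸] {P : 𝔸} (hP : IsIdempotentElem P) (a : 𝕂) :
    exp (a • P) = 1 - P + exp a • P := by
  have hterm : ∀ n : ℕ, (n !⁻¹ : 𝕂) • (a • P) ^ n
      = Pi.single (M := fun _ => 𝔸) 0 (1 - P) n + ((n !⁻¹ : 𝕂) • a ^ n) • P := by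
    rintro (_ | n)
    · simp
    · rw [smul_pow, hP.pow_succ_eq, smul_smul, Pi.single_eq_of_ne n.succ_ne_zero, zero_add,
        smul_eq_mul]
  have hsum := (hasSum_pi_single 0 (1 - P)).add
    ((exp_series_hasSum_exp' (𝕂 := 𝕂) a).smul_const P)
  simp_rw [← hterm] at hsum
  exact (exp_series_hasSum_exp' (𝕂 := 𝕂) (a • P)).unique hsum

open NormedSpace in
theorem exp_smul_of_mul_self_eq_one {𝔸 : Type*} [NormedRing 𝔸] [NormedAlgebra ℂ 𝔸]
    [CompleteSpace 𝔸] {S : 𝔸} (hS : S * S = 1) (b : ℂ) :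
    exp (b • S) = Complex.cosh b • (1 : 𝔸) + Complex.sinh b • S := by
  have hP : IsIdempotentElem ((2 : ℂ)⁻¹ • (1 + S)) := by
    have : (1 + S) * (1 + S) = (2 : ℂ) • (1 + S) := by
      rw [two_smul, add_mul, mul_add, mul_add, hS, one_mul, one_mul, mul_one]; abel
    rw [IsIdempotentElem, smul_mul_smul_comm, this, smul_smul]
    norm_num
  have hsplit : b • S = (2 * b) • ((2 : ℂ)⁻¹ • (1 + S)) + algebraMap ℂ 𝔸 (-b) := by
    rw [Algebra.algebraMap_eq_smul_one]
    match_scalars <;> ring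
  let : NormedAlgebra ℚ 𝔸 := .restrictScalars ℚ ℂ 𝔸
  rw [hsplit, NormedSpace.exp_add_of_commute (Algebra.commute_algebraMap_right _ _), hP.exp_smul,
    ← algebraMap_exp_comm, ← Complex.exp_eq_exp_ℂ, Complex.cosh, Complex.sinh,
    Algebra.algebraMap_eq_smul_one, mul_smul_comm, mul_one]
  match_scalars <;> rw [two_mul, Complex.exp_add, Complex.exp_neg] <;> field_simp <;> ring

theorem swapGate_mul_self : swapGate * swapGate = 1 := by
  ext ⟨a, b⟩ ⟨c, d⟩
  simp [swapGate, mul_apply, one_apply, Fintype.sum_prod_type, ite_and, Prod.ext_iff]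

theorem one_add_sigma_dot_sigma_eq_two_smul_swapGate :
    (1 : Matrix (Fin 2 × Fin 2) (Fin 2 × Fin 2) ℂ)
      + sigmaX ⊗ₖ sigmaX + sigmaY ⊗ₖ sigmaY + sigmaZ ⊗ₖ sigmaZ = (2 : ℂ) • swapGate := by
  ext ⟨a, b⟩ ⟨c, d⟩
  fin_cases a <;> fin_cases b <;> fin_cases c <;> fin_cases d <;>
    simp [sigmaX, sigmaY, sigmaZ, swapGate, kroneckerMap_apply] <;> ring

/-- The half-period time evolution `e^{-i H₁ τ/2}` of one bond term
`(π/(2τ))(1 + σ⃗_{i,A}·σ⃗_{i,B})` of the spin model is the SWAP gate, up to the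
global phase `-i`. -/
theorem exp_bond_term_eq_neg_I_smul_swap :
    NormedSpace.exp
        ((-I * (Real.pi / 4 : ℝ)) •
          ((1 : Matrix (Fin 2 × Fin 2) (Fin 2 × Fin 2) ℂ)
            + sigmaX ⊗ₖ sigmaX + sigmaY ⊗ₖ sigmaY + sigmaZ ⊗ₖ sigmaZ))
      = (-I) • swapGate := by
  let := Matrix.linftyOpNormedRing (n := Fin 2 × Fin 2) (α := ℂ)
  let := Matrix.linftyOpNormedAlgebra (n := Fin 2 × Fin 2) (R := ℂ) (α := ℂ)
  have hb : (-I * (Real.pi / 4 : ℝ)) * 2 = (-(Real.pi / 2) : ℂ) * I := by push_cast; ring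
  calc _ = NormedSpace.exp (((-(Real.pi / 2) : ℂ) * I) • swapGate) := by
        rw [one_add_sigma_dot_sigma_eq_two_smul_swapGate, smul_smul, hb]
    _ = Complex.cosh ((-(Real.pi / 2) : ℂ) * I) • 1
          + Complex.sinh ((-(Real.pi / 2) : ℂ) * I) • swapGate :=
        exp_smul_of_mul_self_eq_one swapGate_mul_self _
    _ = (-I) • swapGate := by
      rw [Complex.cosh_mul_I, Complex.sinh_mul_I, ← Complex.ofReal_ofNat, ← Complex.ofReal_div,
        ← Complex.ofReal_neg, ← Complex.ofReal_cos, ← Complex.ofReal_sin, Real.cos_neg,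
        Real.sin_neg, Real.cos_pi_div_two, Real.sin_pi_div_two]
      simp
end

section
/- The mean-field self-consistent equation at half filling: let M be a positive integer, let the sites be indexed by i ∈ {1,…,2M}, with odd sites those of odd index, and for an M-element subset S of the sites let k(S) = |S ∩ {odd sites}| and σ̃ᵢ(S) = (−1)^{i−1}·(2·𝟙[i ∈ S] − 1). Then for every real c and every site i, (Σ_{S : |S| = M} σ̃ᵢ(S)·exp(c·k(S))) / (Σ_{S : |S| = M} exp(c·k(S))) = (1/(2M)) · (Σ_{n=0}^{M} (4n − 2M)·C(M,n)²·exp(c·n)) / (Σ_{n=0}^{M} C(M,n)²·exp(c·n)); in particular the left-hand side is independent of the site i. -/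
/-!
A half-filled configuration `S` splits uniquely as `T ∪ U` with `T` a set of `n = k(S)` odd
sites and `U` a set of `M - n` even sites, and its Boltzmann weight depends on `n` only. The
sector `n` therefore contributes `C(M,n)² e^{cn}` to the partition function. Within it, a fixed
odd site is occupied in a fraction `n / M` of the configurations and a fixed even site in a
fraction `(M - n) / M`, so after the staggering sign both give the average `(2n - M) / M`.
-/

open Finset

namespace Finset

variable {α : Type*} [DecidableEq α]

theorem inter_union_inter_eq_of_subset_union {S X Y : Finset α} (h : S ⊆ X ∪ Y) :
    S ∩ X ∪ S ∩ Y = S := by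
  rw [← inter_union_distrib_left, inter_eq_left.mpr h]

theorem union_inter_eq_left_of_disjoint {X Y T U : Finset α} (h : Disjoint X Y)
    (hT : T ⊆ X) (hU : U ⊆ Y) : (T ∪ U) ∩ X = T := by
  rw [union_inter_distrib_right, inter_eq_left.mpr hT,
    disjoint_iff_inter_eq_empty.mp (h.symm.mono_left hU), union_empty]

theorem sum_powersetCard_union {β : Type*} [AddCommMonoid β] {X Y : Finset α}
    (h : Disjoint X Y) (m : ℕ) (g : Finset α → β) :
    ∑ S ∈ (X ∪ Y).powersetCard m, g S =
      ∑ n ∈ range (m + 1), ∑ T ∈ X.powersetCard n, ∑ U ∈ Y.powersetCard (m - n),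
        g (T ∪ U) := by
  have hcard : ∀ S ∈ (X ∪ Y).powersetCard m, #(S ∩ X) ∈ range (m + 1) := fun S hS => by
    rw [mem_range, Nat.lt_succ_iff, ← (mem_powersetCard.mp hS).2]
    exact card_le_card inter_subset_left
  rw [← sum_fiberwise_of_maps_to hcard]
  refine sum_congr rfl fun n hn => ?_
  have hnm : n ≤ m := Nat.lt_succ_iff.mp (mem_range.mp hn)
  rw [← sum_product']
  refine sum_nbij' (fun S => (S ∩ X, S ∩ Y)) (fun p => p.1 ∪ p.2) ?_ ?_ ?_ ?_ ?_
  · simp only [mem_filter, mem_powersetCard, mem_product]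
    rintro S ⟨⟨hS, rfl⟩, rfl⟩
    have hsplit := card_union_of_disjoint (h.mono (inter_subset_right (s₁ := S))
      (inter_subset_right (s₁ := S)))
    rw [inter_union_inter_eq_of_subset_union hS] at hsplit
    exact ⟨⟨inter_subset_right, rfl⟩, inter_subset_right, by omega⟩
  · simp only [mem_filter, mem_powersetCard, mem_product]
    rintro ⟨T, U⟩ ⟨⟨hT, rfl⟩, hU, hUc⟩
    refine ⟨⟨union_subset_union hT hU, ?_⟩, by rw [union_inter_eq_left_of_disjoint h hT hU]⟩
    rw [card_union_of_disjoint (h.mono hT hU)]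
    omega
  · intro S hS
    exact inter_union_inter_eq_of_subset_union (mem_powersetCard.mp (mem_filter.mp hS).1).1
  · simp only [mem_powersetCard, mem_product]
    rintro ⟨T, U⟩ ⟨⟨hT, -⟩, hU, -⟩
    rw [union_inter_eq_left_of_disjoint h hT hU, union_comm,
      union_inter_eq_left_of_disjoint h.symm hU hT]
  · intro S hS
    rw [inter_union_inter_eq_of_subset_union (mem_powersetCard.mp (mem_filter.mp hS).1).1]

theorem sum_powersetCard_eq_sum_card_filter {β : Type*} [AddCommMonoid β] (s : Finset α)
    (p : α → Prop) [DecidablePred p] (m : ℕ) (f : ℕ → Finset α → β) :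
    ∑ S ∈ s.powersetCard m, f #(S.filter p) S =
      ∑ n ∈ range (m + 1), ∑ T ∈ (s.filter p).powersetCard n,
        ∑ U ∈ (s.filter (¬ p ·)).powersetCard (m - n), f n (T ∪ U) := by
  have h := sum_powersetCard_union (disjoint_filter_filter_not s s p) m
    (fun S => f #(S.filter p) S)
  rw [filter_union_filter_not_eq] at h
  rw [h]
  refine sum_congr rfl fun n _ => sum_congr rfl fun T hT => sum_congr rfl fun U hU => ?_
  obtain ⟨hTs, rfl⟩ := mem_powersetCard.mp hT
  have hUs := (mem_powersetCard.mp hU).1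
  rw [filter_union, filter_true_of_mem fun j hj => (mem_filter.mp (hTs hj)).2,
    filter_false_of_mem fun j hj => (mem_filter.mp (hUs hj)).2, union_empty]

theorem card_mul_sum_powersetCard_sign (X : Finset α) {i : α} (hi : i ∈ X) (n : ℕ) :
    (#X : ℝ) * ∑ T ∈ X.powersetCard n, (2 * (if i ∈ T then (1 : ℝ) else 0) - 1) =
      (2 * n - #X) * (#X).choose n := by
  have hmiss : (X.powersetCard n).filter (i ∉ ·) = (X.erase i).powersetCard n := by
    ext T
    simp only [mem_filter, mem_powersetCard, subset_erase]
    tauto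
  have hcount : ∑ T ∈ X.powersetCard n, (2 * (if i ∈ T then (1 : ℝ) else 0) - 1) =
      (#X).choose n - 2 * (#(X.erase i)).choose n := by
    have hflip : ∀ T : Finset α, 2 * (if i ∈ T then (1 : ℝ) else 0) - 1 =
        1 - 2 * (if i ∉ T then 1 else 0) := fun T => by split_ifs <;> norm_num
    simp only [hflip, sum_sub_distrib, ← mul_sum, sum_boole, hmiss, sum_const,
      card_powersetCard, nsmul_one]
  rw [hcount, ← card_erase_add_one hi]
  set N := #(X.erase i)
  rcases le_or_gt n (N + 1) with hn | hn
  · have hpascal : ((N.choose n * (N + 1) : ℕ) : ℝ) = ((N + 1).choose n * (N + 1 - n) : ℕ) :=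
      congrArg _ (Nat.choose_mul_succ_eq N n)
    push_cast [hn] at hpascal ⊢
    linear_combination (-2) * hpascal
  · simp [Nat.choose_eq_zero_of_lt hn, Nat.choose_eq_zero_of_lt (Nat.lt_of_succ_lt hn)]

theorem card_mul_sum_sum_powersetCard_sign {X Y : Finset α} (h : Disjoint X Y) {i : α}
    (hi : i ∈ X) (a b : ℕ) :
    (#X : ℝ) * ∑ T ∈ X.powersetCard a, ∑ U ∈ Y.powersetCard b,
        (2 * (if i ∈ T ∪ U then (1 : ℝ) else 0) - 1) =
      (2 * a - #X) * (#X).choose a * (#Y).choose b := by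
  have hiU : ∀ U ∈ Y.powersetCard b, i ∉ U := fun U hU hiU =>
    disjoint_left.mp h hi ((mem_powersetCard.mp hU).1 hiU)
  have hinner : ∀ T : Finset α, ∑ U ∈ Y.powersetCard b,
      (2 * (if i ∈ T ∪ U then (1 : ℝ) else 0) - 1) =
        (#Y).choose b * (2 * (if i ∈ T then (1 : ℝ) else 0) - 1) := fun T => by
    rw [sum_congr rfl (g := fun _ => 2 * (if i ∈ T then (1 : ℝ) else 0) - 1)
      fun U hU => by simp only [mem_union, hiU U hU, or_false], sum_const,
      card_powersetCard, nsmul_eq_mul]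
  simp only [hinner, ← mul_sum]
  rw [mul_left_comm, card_mul_sum_powersetCard_sign X hi a]
  ring

end Finset

theorem card_filter_odd_Icc_one_two_mul (M : ℕ) : #{j ∈ Icc 1 (2 * M) | Odd j} = M := by
  have himage : (range M).image (fun k => 2 * k + 1) = {j ∈ Icc 1 (2 * M) | Odd j} := by
    ext j
    simp only [mem_image, mem_range, mem_filter, mem_Icc, Nat.odd_iff]
    constructor
    · rintro ⟨k, hk, rfl⟩
      omega
    · rintro ⟨⟨-, hj⟩, hodd⟩
      exact ⟨j / 2, by omega, by omega⟩
  rw [← himage, card_image_of_injective _ fun a b hab => by omega, card_range]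

theorem card_filter_not_odd_Icc_one_two_mul (M : ℕ) :
    #{j ∈ Icc 1 (2 * M) | ¬ Odd j} = M := by
  have h := card_filter_add_card_filter_not (s := Icc 1 (2 * M)) (p := fun j => Odd j)
  rw [card_filter_odd_Icc_one_two_mul, Nat.card_Icc] at h
  omega

theorem neg_one_pow_mul_sum_powersetCard_odd_even_sign {M n i : ℕ} (hn : n ≤ M)
    (hi : i ∈ Icc 1 (2 * M)) :
    (-1 : ℝ) ^ (i - 1) * (M * ∑ T ∈ {j ∈ Icc 1 (2 * M) | Odd j}.powersetCard n,
        ∑ U ∈ {j ∈ Icc 1 (2 * M) | ¬ Odd j}.powersetCard (M - n),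
          (2 * (if i ∈ T ∪ U then (1 : ℝ) else 0) - 1)) =
      (2 * n - M) * (M.choose n) ^ 2 := by
  have hdisj := disjoint_filter_filter_not (Icc 1 (2 * M)) (Icc 1 (2 * M)) (fun j => Odd j)
  have hO := card_filter_odd_Icc_one_two_mul M
  have hE := card_filter_not_odd_Icc_one_two_mul M
  by_cases hodd : Odd i
  · have h := card_mul_sum_sum_powersetCard_sign hdisj (mem_filter.mpr ⟨hi, hodd⟩) n (M - n)
    rw [hO, hE, Nat.choose_symm hn] at h
    rw [h, (Nat.Odd.sub_odd hodd odd_one).neg_one_pow]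
    ring
  · have h :=
      card_mul_sum_sum_powersetCard_sign hdisj.symm (mem_filter.mpr ⟨hi, hodd⟩) (M - n) n
    rw [hO, hE, Nat.choose_symm hn, sum_comm] at h
    simp only [union_comm] at h
    have hsign : Odd (i - 1) :=
      (Nat.odd_sub' (mem_Icc.mp hi).1).mpr (iff_of_true odd_one (Nat.not_odd_iff_even.mp hodd))
    rw [h, hsign.neg_one_pow, Nat.cast_sub hn]
    ring

/-- The mean-field self-consistent equation at half filling: with sites `{1,…,2M}`,
staggered occupation `σ̃ᵢ(S) = (−1)^{i−1}(2·𝟙[i ∈ S] − 1)`, the number of occupied odd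
sites `k(S) = |S ∩ {odd sites}|`, and Boltzmann weight `exp(c·k(S))`, the thermal average
of `σ̃ᵢ` over half-filled configurations equals
`(1/(2M))·(Σₙ (4n − 2M)·C(M,n)²·e^{cn}) / (Σₙ C(M,n)²·e^{cn})` for every site `i`;
in particular it is independent of `i`. -/
theorem mean_field_self_consistent_equation (M : ℕ) (hM : 0 < M) (c : ℝ)
    (i : ℕ) (hi : i ∈ Finset.Icc 1 (2 * M)) :
    (∑ S ∈ (Finset.Icc 1 (2 * M)).powersetCard M,
        ((-1 : ℝ)) ^ (i - 1) * (2 * (if i ∈ S then (1 : ℝ) else 0) - 1) *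
          Real.exp (c * ((S.filter (fun j => Odd j)).card : ℝ)))
      / (∑ S ∈ (Finset.Icc 1 (2 * M)).powersetCard M,
          Real.exp (c * ((S.filter (fun j => Odd j)).card : ℝ)))
    = (1 / (2 * M : ℝ)) *
        ((∑ n ∈ Finset.range (M + 1),
            ((4 * n : ℝ) - 2 * M) * (M.choose n : ℝ) ^ 2 * Real.exp (c * n))
          / (∑ n ∈ Finset.range (M + 1), (M.choose n : ℝ) ^ 2 * Real.exp (c * n))) := by
  have hden :
      ∑ S ∈ (Icc 1 (2 * M)).powersetCard M, Real.exp (c * #(S.filter (fun j => Odd j))) =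
        ∑ n ∈ range (M + 1), (M.choose n : ℝ) ^ 2 * Real.exp (c * n) := by
    rw [sum_powersetCard_eq_sum_card_filter _ _ _ fun n _ => Real.exp (c * n)]
    refine sum_congr rfl fun n hn => ?_
    simp only [sum_const, card_powersetCard, card_filter_odd_Icc_one_two_mul,
      card_filter_not_odd_Icc_one_two_mul, nsmul_eq_mul,
      Nat.choose_symm (Nat.lt_succ_iff.mp (mem_range.mp hn))]
    ring
  have hnum :
      ∑ n ∈ range (M + 1), ((4 * n : ℝ) - 2 * M) * (M.choose n : ℝ) ^ 2 * Real.exp (c * n) =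
        2 * M * ∑ S ∈ (Icc 1 (2 * M)).powersetCard M,
          (-1 : ℝ) ^ (i - 1) * (2 * (if i ∈ S then (1 : ℝ) else 0) - 1) *
            Real.exp (c * #(S.filter (fun j => Odd j))) := by
    rw [sum_powersetCard_eq_sum_card_filter _ _ _ fun n S =>
        (-1 : ℝ) ^ (i - 1) * (2 * (if i ∈ S then (1 : ℝ) else 0) - 1) * Real.exp (c * n),
      mul_sum]
    refine sum_congr rfl fun n hn => ?_
    simp only [← sum_mul, ← mul_sum]
    linear_combination (-2 * Real.exp (c * n)) *
      neg_one_pow_mul_sum_powersetCard_odd_even_sign (Nat.lt_succ_iff.mp (mem_range.mp hn)) hi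
  have hM' : (M : ℝ) ≠ 0 := by positivity
  rw [hden, hnum]
  field_simp
end

section
/- The mean-field self-consistency function is odd and strictly bounded by 1: for every even integer N ≥ 2 and every real a, the function F : ℝ → ℝ defined by F(m) = (1/N)·(Σ_{n=0}^{N/2} (4n−N)·C(N/2,n)²·exp(a·m·n)) / (Σ_{n=0}^{N/2} C(N/2,n)²·exp(a·m·n)) satisfies F(−m) = −F(m) and −1 < F(m) < 1 for all real m. -/
/-!
Write `wₙ(m) = C(K,n)² e^{amn}` with `K = N/2`. Then `F(m)` is the `w(m)`-weighted average of
`(4n − N)/N = 2n/K − 1 ∈ [−1, 1]`; all weights are positive and both endpoints `n = 0` and `n = K`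
occur, so the average lies strictly inside `(−1, 1)`. Reflecting `n ↦ K − n` fixes `C(K,n)`,
turns `wₙ(−m)` into `e^{−amK} w_{K−n}(m)` and flips the sign of `4n − N`; the common factor
cancels in the quotient, so `F` is odd.
-/

open Finset Real

section WeightedSum

variable {ι R : Type*} [Ring R] [LinearOrder R] [IsStrictOrderedRing R]
  {s : Finset ι} {v w : ι → R} {c : R} {j : ι}

lemma sum_mul_lt_mul_sum (hw : ∀ i ∈ s, 0 ≤ w i) (hv : ∀ i ∈ s, v i ≤ c) (hj : j ∈ s)
    (hvj : v j < c) (hwj : 0 < w j) : ∑ i ∈ s, v i * w i < c * ∑ i ∈ s, w i := by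
  rw [mul_sum]
  exact sum_lt_sum (fun i hi => mul_le_mul_of_nonneg_right (hv i hi) (hw i hi))
    ⟨j, hj, mul_lt_mul_of_pos_right hvj hwj⟩

lemma mul_sum_lt_sum_mul (hw : ∀ i ∈ s, 0 ≤ w i) (hv : ∀ i ∈ s, c ≤ v i) (hj : j ∈ s)
    (hvj : c < v j) (hwj : 0 < w j) : c * ∑ i ∈ s, w i < ∑ i ∈ s, v i * w i := by
  have := sum_mul_lt_mul_sum (v := -v) hw (fun i hi => neg_le_neg (hv i hi)) hj (neg_lt_neg hvj) hwj
  simpa only [Pi.neg_apply, neg_mul, sum_neg_distrib, neg_lt_neg_iff] using this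

end WeightedSum

lemma sum_mul_choose_sq_mul_exp_neg (K : ℕ) (g : ℕ → ℝ) (a m : ℝ) :
    ∑ n ∈ range (K + 1), g n * (K.choose n : ℝ) ^ 2 * exp (a * -m * n) =
      exp (-(a * m * K)) *
        ∑ n ∈ range (K + 1), g (K - n) * (K.choose n : ℝ) ^ 2 * exp (a * m * n) := by
  rw [← sum_range_reflect, mul_sum]
  refine sum_congr rfl fun n hn => ?_
  have hnK : n ≤ K := Nat.lt_succ_iff.mp (mem_range.mp hn)
  rw [Nat.add_sub_cancel, Nat.choose_symm hnK, Nat.cast_sub hnK,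
    show a * -m * (K - n) = -(a * m * K) + a * m * n by ring, exp_add]
  ring

lemma sum_choose_sq_mul_exp_neg (K : ℕ) (a m : ℝ) :
    ∑ n ∈ range (K + 1), (K.choose n : ℝ) ^ 2 * exp (a * -m * n) =
      exp (-(a * m * K)) * ∑ n ∈ range (K + 1), (K.choose n : ℝ) ^ 2 * exp (a * m * n) := by
  simpa only [one_mul] using sum_mul_choose_sq_mul_exp_neg K (fun _ => 1) a m

lemma sum_sub_mul_choose_sq_mul_exp_neg (K : ℕ) (a m : ℝ) :
    ∑ n ∈ range (K + 1), (4 * n - 2 * K : ℝ) * (K.choose n : ℝ) ^ 2 * exp (a * -m * n) =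
      -(exp (-(a * m * K)) *
        ∑ n ∈ range (K + 1), (4 * n - 2 * K : ℝ) * (K.choose n : ℝ) ^ 2 * exp (a * m * n)) := by
  rw [sum_mul_choose_sq_mul_exp_neg, ← mul_neg (exp _), ← sum_neg_distrib]
  congr 1
  refine sum_congr rfl fun n hn => ?_
  rw [Nat.cast_sub (Nat.lt_succ_iff.mp (mem_range.mp hn))]
  ring

lemma sum_sub_mul_choose_sq_mul_exp_div_sum_mem_Ioo {K : ℕ} (hK : 0 < K) (a m : ℝ) :
    (∑ n ∈ range (K + 1), (4 * n - 2 * K : ℝ) * (K.choose n : ℝ) ^ 2 * exp (a * m * n)) /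
        (∑ n ∈ range (K + 1), (K.choose n : ℝ) ^ 2 * exp (a * m * n)) ∈
      Set.Ioo (-(2 * K : ℝ)) (2 * K) := by
  have hw : ∀ n ∈ range (K + 1), 0 < (K.choose n : ℝ) ^ 2 * exp (a * m * n) := fun n hn => by
    have := Nat.choose_pos (Nat.lt_succ_iff.mp (mem_range.mp hn))
    positivity
  have hK' : (0 : ℝ) < K := by exact_mod_cast hK
  have h0 : 0 ∈ range (K + 1) := by simp
  have hKmem : K ∈ range (K + 1) := self_mem_range_succ K
  have hD : 0 < ∑ n ∈ range (K + 1), (K.choose n : ℝ) ^ 2 * exp (a * m * n) :=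
    sum_pos hw ⟨0, h0⟩
  simp only [mul_assoc (_ - _ : ℝ)]
  rw [Set.mem_Ioo, lt_div_iff₀ hD, div_lt_iff₀ hD]
  constructor
  · refine mul_sum_lt_sum_mul (fun n hn => (hw n hn).le) (fun n _ => ?_) hKmem (by linarith)
      (hw K hKmem)
    have := n.cast_nonneg (α := ℝ)
    linarith
  · refine sum_mul_lt_mul_sum (fun n hn => (hw n hn).le) (fun n hn => ?_) h0
      (by rw [Nat.cast_zero]; linarith) (hw 0 h0)
    have : (n : ℝ) ≤ K := by exact_mod_cast Nat.lt_succ_iff.mp (mem_range.mp hn)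
    linarith

theorem mean_field_F_odd_and_bounded_general (N : ℕ) (hNe : Even N) (a : ℝ)
    (F : ℝ → ℝ)
    (hF : F = fun m =>
      (1 / (N : ℝ)) *
        ((∑ n ∈ Finset.range (N / 2 + 1),
            ((4 * n : ℝ) - N) * ((N / 2).choose n : ℝ) ^ 2 * Real.exp (a * m * n))
          / (∑ n ∈ Finset.range (N / 2 + 1),
              ((N / 2).choose n : ℝ) ^ 2 * Real.exp (a * m * n)))) :
    ∀ m : ℝ, F (-m) = -F m ∧ -1 < F m ∧ F m < 1 := by
  obtain ⟨K, rfl⟩ := hNe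
  subst hF
  intro m
  simp only [← two_mul K, Nat.mul_div_cancel_left K two_pos, Nat.cast_mul, Nat.cast_ofNat]
  refine ⟨?_, ?_⟩
  · rw [sum_sub_mul_choose_sq_mul_exp_neg, sum_choose_sq_mul_exp_neg,
      neg_div, mul_div_mul_left _ _ (exp_ne_zero _), mul_neg]
  · rcases K.eq_zero_or_pos with rfl | hK
    · simp -- `F = 0` here, since `1 / 0 = 0`
    obtain ⟨hlo, hhi⟩ := sum_sub_mul_choose_sq_mul_exp_div_sum_mem_Ioo hK a m
    have hK' : (0 : ℝ) < 2 * K := by positivity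
    rw [one_div, ← div_eq_inv_mul, lt_div_iff₀ hK', div_lt_iff₀ hK']
    constructor <;> linarith

/-- The mean-field self-consistency function
`F(m) = (1/N)·(Σₙ (4n−N)·C(N/2,n)²·e^{amn}) / (Σₙ C(N/2,n)²·e^{amn})`
(sums over `0 ≤ n ≤ N/2`) is odd and strictly bounded by `1`:
`F(−m) = −F(m)` and `−1 < F(m) < 1` for all real `m`. -/
theorem mean_field_F_odd_and_bounded (N : ℕ) (hN : 2 ≤ N) (hNe : Even N) (a : ℝ)
    (F : ℝ → ℝ)
    (hF : F = fun m =>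
      (1 / (N : ℝ)) *
        ((∑ n ∈ Finset.range (N / 2 + 1),
            ((4 * n : ℝ) - N) * ((N / 2).choose n : ℝ) ^ 2 * Real.exp (a * m * n))
          / (∑ n ∈ Finset.range (N / 2 + 1),
              ((N / 2).choose n : ℝ) ^ 2 * Real.exp (a * m * n)))) :
    ∀ m : ℝ, F (-m) = -F m ∧ -1 < F m ∧ F m < 1 :=
  mean_field_F_odd_and_bounded_general N hNe a F hF
end

section
/- Existence of spontaneous spatial translation symmetry breaking in mean field: let N ≥ 2 be an even integer, a > 0 a real number, and define F : ℝ → ℝ by F(m) = (1/N)·(Σ_{n=0}^{N/2} (4n−N)·C(N/2,n)²·exp(a·m·n)) / (Σ_{n=0}^{N/2} C(N/2,n)²·exp(a·m·n)). If (a/(4N))·(Σ_{n=0}^{N/2} (4n−N)²·C(N/2,n)²) / (Σ_{n=0}^{N/2} C(N/2,n)²) > 1, then there exists m with 0 < m < 1 and F(m) = m (and by oddness −m is also a solution); i.e., the self-consistent equation has nonzero solutions. -/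
/-!
Write `N = 2K` and `F m = num m / (N · den m)`, where `num` and `den` are the sums of
`(4n - 2K) w n e^{amn}` and `w n e^{amn}` over `n = 0, …, K` with the weights `w n = C(K, n)²`.
Since `w (K - n) = w n`, the reflection `n ↦ K - n` changes the sign of `4n - 2K` and only
multiplies `e^{amn}` by a common factor when `m ↦ -m`, so `F` is odd and `F 0 = 0`. Since
`4n - 2K ≤ 2K`, strictly at `n = 0`, `F m < 1` everywhere. If `F' 0 > 1`, then `F m - m` is
positive just to the right of `0` and negative at `1`, so it has a zero in `(0, 1)`.
-/

open Finset Real Set Filter Topology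

theorem exists_mem_Ioo_eq_zero_of_hasDerivAt_pos {G : ℝ → ℝ} {d b : ℝ} (hb : 0 < b)
    (hG : ContinuousOn G (Icc 0 b)) (hG0 : G 0 = 0) (hd : HasDerivAt G d 0) (hd_pos : 0 < d)
    (hGb : G b < 0) : ∃ m ∈ Ioo 0 b, G m = 0 := by
  have hslope : ∀ᶠ x in 𝓝[>] 0, 0 < slope G 0 x :=
    ((hasDerivWithinAt_iff_tendsto_slope' self_notMem_Ioi).mp hd.hasDerivWithinAt).eventually
      (eventually_gt_nhds hd_pos)
  obtain ⟨x, hx_slope, hx⟩ := (hslope.and (Ioo_mem_nhdsGT hb)).exists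
  have hGx : 0 < G x := by
    rwa [slope_def_field, hG0, sub_zero, sub_zero, div_pos_iff_of_pos_right hx.1] at hx_slope
  obtain ⟨m, hm, hGm⟩ :=
    intermediate_value_Ioo' hx.2.le (hG.mono (Icc_subset_Icc hx.1.le le_rfl)) ⟨hGb, hGx⟩
  exact ⟨m, ⟨hx.1.trans hm.1, hm.2⟩, hGm⟩

theorem hasDerivAt_sum_mul_exp {ι : Type*} (s : Finset ι) (c t : ι → ℝ) (a m : ℝ) :
    HasDerivAt (fun x => ∑ i ∈ s, c i * exp (a * x * t i))
      (∑ i ∈ s, c i * (a * t i) * exp (a * m * t i)) m := by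
  refine HasDerivAt.fun_sum fun i _ => ?_
  have hlin : HasDerivAt (fun x => a * x * t i) (a * t i) m := by
    simpa using ((hasDerivAt_id' m).const_mul a).mul_const (t i)
  exact (hlin.exp.const_mul (c i)).congr_deriv (by ring)

theorem sum_range_succ_mul_exp_neg {K : ℕ} {c : ℕ → ℝ} {ε : ℝ}
    (hc : ∀ n ≤ K, c (K - n) = ε * c n) (a m : ℝ) :
    ∑ n ∈ range (K + 1), c n * exp (a * -m * n) =
      ε * exp (-(a * m * K)) * ∑ n ∈ range (K + 1), c n * exp (a * m * n) := by
  rw [← sum_range_reflect, mul_sum]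
  refine sum_congr rfl fun n hn => ?_
  have hn : n ≤ K := mem_range_succ_iff.mp hn
  rw [add_tsub_cancel_right, hc n hn, Nat.cast_sub hn,
    show a * -m * (K - n) = -(a * m * K) + a * m * n by ring, exp_add]
  ring

namespace MeanField

variable (w : ℕ → ℝ) (K : ℕ) (a : ℝ)

noncomputable def den (m : ℝ) : ℝ := ∑ n ∈ range (K + 1), w n * exp (a * m * n)

noncomputable def num (m : ℝ) : ℝ :=
  ∑ n ∈ range (K + 1), ((4 * n : ℝ) - 2 * K) * w n * exp (a * m * n)

noncomputable def rhs (m : ℝ) : ℝ := 1 / (2 * K : ℝ) * (num w K a m / den w K a m)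

variable {w K}

theorem den_pos (hw : ∀ n ≤ K, 0 < w n) (m : ℝ) : 0 < den w K a m :=
  sum_pos (fun n hn => mul_pos (hw n (mem_range_succ_iff.mp hn)) (exp_pos _))
    nonempty_range_add_one

theorem num_lt_mul_den (hK : 0 < K) (hw : ∀ n ≤ K, 0 < w n) (m : ℝ) :
    num w K a m < 2 * K * den w K a m := by
  rw [num, den, mul_sum]
  refine sum_lt_sum (fun n hn => ?_) ⟨0, mem_range.mpr K.succ_pos, ?_⟩
  · have hn : n ≤ K := mem_range_succ_iff.mp hn
    have hnK : (n : ℝ) ≤ K := by exact_mod_cast hn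
    rw [mul_assoc]
    exact mul_le_mul_of_nonneg_right (by linarith) (mul_pos (hw n hn) (exp_pos _)).le
  · have hK : (0 : ℝ) < K := by exact_mod_cast hK
    rw [mul_assoc]
    exact mul_lt_mul_of_pos_right (by push_cast; linarith) (mul_pos (hw 0 K.zero_le) (exp_pos _))

theorem den_neg (hw : ∀ n ≤ K, w (K - n) = w n) (m : ℝ) :
    den w K a (-m) = exp (-(a * m * K)) * den w K a m := by
  rw [den, den, sum_range_succ_mul_exp_neg (ε := 1) (by simpa using hw), one_mul]

theorem num_neg (hw : ∀ n ≤ K, w (K - n) = w n) (m : ℝ) :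
    num w K a (-m) = -exp (-(a * m * K)) * num w K a m := by
  rw [num, num]
  refine (sum_range_succ_mul_exp_neg (ε := -1) (fun n hn => ?_) a m).trans (by ring)
  rw [hw n hn, Nat.cast_sub hn]
  ring

theorem num_zero (hw : ∀ n ≤ K, w (K - n) = w n) : num w K a 0 = 0 := by
  have := num_neg a hw 0
  simp only [neg_zero, mul_zero, zero_mul, exp_zero] at this
  linarith

theorem hasDerivAt_num (m : ℝ) :
    HasDerivAt (num w K a)
      (∑ n ∈ range (K + 1), ((4 * n : ℝ) - 2 * K) * w n * (a * n) * exp (a * m * n)) m :=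
  hasDerivAt_sum_mul_exp _ _ _ a m

theorem hasDerivAt_den (m : ℝ) :
    HasDerivAt (den w K a) (∑ n ∈ range (K + 1), w n * (a * n) * exp (a * m * n)) m :=
  hasDerivAt_sum_mul_exp _ _ _ a m

theorem den_zero : den w K a 0 = ∑ n ∈ range (K + 1), w n := by
  simp [den]

-- `a n = a / 4 * (4 n - 2 K) + a K / 2`, and the constant part drops out since `num 0 = 0`.
theorem hasDerivAt_num_zero (hw : ∀ n ≤ K, w (K - n) = w n) :
    HasDerivAt (num w K a)
      (a / 4 * ∑ n ∈ range (K + 1), ((4 * n : ℝ) - 2 * K) ^ 2 * w n) 0 := by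
  refine (hasDerivAt_num a 0).congr_deriv ?_
  have h0 := num_zero a hw
  simp only [num, mul_zero, zero_mul, exp_zero, mul_one] at h0 ⊢
  calc _ = ∑ n ∈ range (K + 1), (a / 4 * (((4 * n : ℝ) - 2 * K) ^ 2 * w n)
          + a * K / 2 * (((4 * n : ℝ) - 2 * K) * w n)) := sum_congr rfl fun n _ => by ring
    _ = _ := by rw [sum_add_distrib, ← mul_sum, ← mul_sum, h0, mul_zero, add_zero]

theorem rhs_neg (hw : ∀ n ≤ K, w (K - n) = w n) (m : ℝ) :
    rhs w K a (-m) = -rhs w K a m := by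
  rw [rhs, rhs, num_neg a hw, den_neg a hw, neg_mul, neg_div,
    mul_div_mul_left _ _ (exp_ne_zero _), mul_neg]

theorem rhs_zero (hw : ∀ n ≤ K, w (K - n) = w n) : rhs w K a 0 = 0 := by
  rw [rhs, num_zero a hw, zero_div, mul_zero]

theorem rhs_lt_one (hK : 0 < K) (hw : ∀ n ≤ K, 0 < w n) (m : ℝ) :
    rhs w K a m < 1 := by
  rw [rhs, one_div_mul_eq_div, div_div,
    div_lt_one (mul_pos (den_pos a hw m) (by positivity)), mul_comm]
  exact num_lt_mul_den a hK hw m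

theorem continuous_rhs (hw : ∀ n ≤ K, 0 < w n) : Continuous (rhs w K a) := by
  have hnum : Continuous (num w K a) := by unfold num; fun_prop
  have hden : Continuous (den w K a) := by unfold den; fun_prop
  exact continuous_const.mul (hnum.div hden fun m => (den_pos a hw m).ne')

theorem hasDerivAt_rhs_zero (hw_symm : ∀ n ≤ K, w (K - n) = w n)
    (hw_pos : ∀ n ≤ K, 0 < w n) :
    HasDerivAt (rhs w K a) (a / (4 * (2 * K)) *
      ((∑ n ∈ range (K + 1), ((4 * n : ℝ) - 2 * K) ^ 2 * w n) /
        ∑ n ∈ range (K + 1), w n)) 0 := by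
  have hS0 : 0 < ∑ n ∈ range (K + 1), w n := den_zero (a := a) ▸ den_pos a hw_pos 0
  refine (((hasDerivAt_num_zero a hw_symm).div (hasDerivAt_den a 0)
    (den_pos a hw_pos 0).ne').const_mul (1 / (2 * K : ℝ))).congr_deriv ?_
  rw [num_zero a hw_symm, den_zero]
  field_simp
  ring

theorem exists_rhs_eq_self (hK : 0 < K) (hw_symm : ∀ n ≤ K, w (K - n) = w n)
    (hw_pos : ∀ n ≤ K, 0 < w n)
    (hslope : 1 < a / (4 * (2 * K)) *
      ((∑ n ∈ range (K + 1), ((4 * n : ℝ) - 2 * K) ^ 2 * w n) /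
        ∑ n ∈ range (K + 1), w n)) :
    ∃ m ∈ Set.Ioo 0 1, rhs w K a m = m := by
  obtain ⟨m, hm, hm_root⟩ :=
    exists_mem_Ioo_eq_zero_of_hasDerivAt_pos (G := fun m => rhs w K a m - m) one_pos
    ((continuous_rhs a hw_pos).sub continuous_id).continuousOn
    (by rw [rhs_zero a hw_symm, sub_zero])
    ((hasDerivAt_rhs_zero a hw_symm hw_pos).sub (hasDerivAt_id' 0)) (sub_pos.mpr hslope)
    (sub_neg.mpr (rhs_lt_one a hK hw_pos 1))
  exact ⟨m, hm, sub_eq_zero.mp hm_root⟩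

end MeanField

open MeanField in
theorem mean_field_ssb_exists_nonzero_solution_general (N : ℕ) (hN : 2 ≤ N) (hNe : Even N)
    (a : ℝ)
    (F : ℝ → ℝ)
    (hF : F = fun m =>
      (1 / (N : ℝ)) *
        ((∑ n ∈ Finset.range (N / 2 + 1),
            ((4 * n : ℝ) - N) * ((N / 2).choose n : ℝ) ^ 2 * Real.exp (a * m * n))
          / (∑ n ∈ Finset.range (N / 2 + 1),
              ((N / 2).choose n : ℝ) ^ 2 * Real.exp (a * m * n))))
    (hslope : (a / (4 * N : ℝ)) *
        ((∑ n ∈ Finset.range (N / 2 + 1),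
            ((4 * n : ℝ) - N) ^ 2 * ((N / 2).choose n : ℝ) ^ 2)
          / (∑ n ∈ Finset.range (N / 2 + 1), ((N / 2).choose n : ℝ) ^ 2)) > 1) :
    ∃ m : ℝ, 0 < m ∧ m < 1 ∧ F m = m ∧ F (-m) = -m := by
  obtain ⟨K, rfl⟩ := hNe
  rw [show (K + K) / 2 = K by omega, Nat.cast_add, ← two_mul] at hF hslope
  subst hF
  have hw_symm : ∀ n ≤ K, (K.choose (K - n) : ℝ) ^ 2 = (K.choose n : ℝ) ^ 2 :=
    fun n hn => by rw [Nat.choose_symm hn]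
  have hw_pos : ∀ n ≤ K, 0 < (K.choose n : ℝ) ^ 2 :=
    fun n hn => pow_pos (Nat.cast_pos.mpr (Nat.choose_pos hn)) 2
  obtain ⟨m, hm, hFm⟩ := exists_rhs_eq_self a (by omega) hw_symm hw_pos hslope
  exact ⟨m, hm.1, hm.2, hFm, (rhs_neg a hw_symm m).trans (by rw [hFm])⟩

/-- Existence of spontaneous spatial translation symmetry breaking in mean field:
if the slope criterion
`(a/(4N))·(Σₙ (4n−N)²·C(N/2,n)²)/(Σₙ C(N/2,n)²) > 1` holds, then the self-consistent
equation `m = F(m)` for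
`F(m) = (1/N)·(Σₙ (4n−N)·C(N/2,n)²·e^{amn}) / (Σₙ C(N/2,n)²·e^{amn})`
has a solution with `0 < m < 1` (and, by oddness, `−m` is also a solution). -/
theorem mean_field_ssb_exists_nonzero_solution (N : ℕ) (hN : 2 ≤ N) (hNe : Even N)
    (a : ℝ) (ha : 0 < a)
    (F : ℝ → ℝ)
    (hF : F = fun m =>
      (1 / (N : ℝ)) *
        ((∑ n ∈ Finset.range (N / 2 + 1),
            ((4 * n : ℝ) - N) * ((N / 2).choose n : ℝ) ^ 2 * Real.exp (a * m * n))
          / (∑ n ∈ Finset.range (N / 2 + 1),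
              ((N / 2).choose n : ℝ) ^ 2 * Real.exp (a * m * n))))
    (hslope : (a / (4 * N : ℝ)) *
        ((∑ n ∈ Finset.range (N / 2 + 1),
            ((4 * n : ℝ) - N) ^ 2 * ((N / 2).choose n : ℝ) ^ 2)
          / (∑ n ∈ Finset.range (N / 2 + 1), ((N / 2).choose n : ℝ) ^ 2)) > 1) :
    ∃ m : ℝ, 0 < m ∧ m < 1 ∧ F m = m ∧ F (-m) = -m :=
  mean_field_ssb_exists_nonzero_solution_general N hN hNe a F hF hslope
end
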